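/- Let (M^n,g), n ≥ 3, and let ∇ be the metric connection with vectorial torsion given by a vector field V: ∇_X Y = ∇^g_X Y + ⟨X,Y⟩V − ⟨V,Y⟩X. If ∇ is flat, then the 1-form dual to V is closed, dV = 0; equivalently ⟨∇^g_X V, Y⟩ = ⟨∇^g_Y V, X⟩ for all X,Y. -/

import Mathlib

/-!
For the connection `∇_a b = ∇^g_a b + ⟨a,b⟩v - ⟨v,b⟩a`, the cyclic sum of the curvature
`R^∇(a,b)c` is that of `∇^g`, which vanishes by the first Bianchi identity, plus the cyclic sum
of `dv(a,b) c`. Flatness thus gives `dv(a,b) c + dv(b,c) a + dv(c,a) b = 0`; pairing with `c = eₖ`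
and summing over an orthonormal frame leaves `(n - 2) dv(a,b) = 0`.
-/

/-- An abstract calculus of vector fields on a Riemannian manifold: `C` is the ring of smooth
functions, `X` the `C`-module of vector fields, `g` the Riemannian metric, `D` the directional
derivative, `bracket` the Lie bracket and `lc` the Levi-Civita connection `∇^g`. -/
structure VectorFieldCalculus (C X : Type*) [CommRing C] [Algebra ℝ C]
    [AddCommGroup X] [Module C X] where
  g : X → X → C
  D : X → C → C
  bracket : X → X → X
  lc : X → X → X
  g_symm : ∀ a b, g a b = g b a
  g_add_left : ∀ a b c, g (a + b) c = g a c + g b c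
  g_smul_left : ∀ (f : C) a b, g (f • a) b = f * g a b
  g_definite : ∀ a, g a a = 0 → a = 0
  D_add : ∀ v f h, D v (f + h) = D v f + D v h
  D_mul : ∀ v f h, D v (f * h) = f * D v h + h * D v f
  D_algebraMap : ∀ v (r : ℝ), D v (algebraMap ℝ C r) = 0
  D_add_vec : ∀ v w f, D (v + w) f = D v f + D w f
  D_smul_vec : ∀ (f : C) v h, D (f • v) h = f * D v h
  bracket_antisymm : ∀ a b, bracket a b = - bracket b a
  bracket_jacobi : ∀ a b c,
    bracket (bracket a b) c + bracket (bracket b c) a + bracket (bracket c a) b = 0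
  bracket_D : ∀ a b f, D (bracket a b) f = D a (D b f) - D b (D a f)
  bracket_leibniz : ∀ a (f : C) b, bracket a (f • b) = D a f • b + f • bracket a b
  lc_add : ∀ z a b, lc z (a + b) = lc z a + lc z b
  lc_smul : ∀ z (f : C) a, lc z (f • a) = D z f • a + f • lc z a
  lc_add_vec : ∀ z w a, lc (z + w) a = lc z a + lc w a
  lc_smul_vec : ∀ (f : C) z a, lc (f • z) a = f • lc z a
  lc_metric : ∀ z a b, D z (g a b) = g (lc z a) b + g a (lc z b)
  lc_torsion_free : ∀ a b, lc a b - lc b a = bracket a b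

/-- A vector field `k` is Killing iff `⟨∇_v k, w⟩ + ⟨∇_w k, v⟩ = 0` for all `v, w`. -/
def VectorFieldCalculus.IsKilling {C X : Type*} [CommRing C] [Algebra ℝ C]
    [AddCommGroup X] [Module C X] (V : VectorFieldCalculus C X) (k : X) : Prop :=
  ∀ v w, V.g (V.lc v k) w + V.g (V.lc w k) v = 0

namespace VectorFieldCalculus

variable {C X : Type*} [CommRing C] [Algebra ℝ C] [AddCommGroup X] [Module C X]
  (V : VectorFieldCalculus C X)

lemma g_add_right (x a b : X) : V.g x (a + b) = V.g x a + V.g x b := by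
  rw [V.g_symm x, V.g_add_left, V.g_symm a, V.g_symm b]

lemma g_smul_right (f : C) (x a : X) : V.g x (f • a) = f * V.g x a := by
  rw [V.g_symm x, V.g_smul_left, V.g_symm a]

lemma g_zero_left (x : X) : V.g 0 x = 0 :=
  map_zero (AddMonoidHom.mk' (V.g · x) (V.g_add_left · · x))

lemma g_sub_left (a b x : X) : V.g (a - b) x = V.g a x - V.g b x :=
  map_sub (AddMonoidHom.mk' (V.g · x) (V.g_add_left · · x)) a b

lemma g_sub_right (x a b : X) : V.g x (a - b) = V.g x a - V.g x b := by
  rw [V.g_symm x, V.g_sub_left, V.g_symm a, V.g_symm b]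

lemma lc_sub (z a b : X) : V.lc z (a - b) = V.lc z a - V.lc z b :=
  map_sub (AddMonoidHom.mk' (V.lc z) (V.lc_add z)) a b

lemma lc_sub_vec (z w a : X) : V.lc (z - w) a = V.lc z a - V.lc w a :=
  map_sub (AddMonoidHom.mk' (V.lc · a) (V.lc_add_vec · · a)) z w

def curvature (nab : X → X → X) (a b c : X) : X :=
  nab a (nab b c) - nab b (nab a c) - nab (V.bracket a b) c

theorem curvature_lc_cyclic_sum (a b c : X) :
    V.curvature V.lc a b c + V.curvature V.lc b c a + V.curvature V.lc c a b = 0 := by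
  have hbracket : ∀ x y z : X, V.lc (V.bracket x y) z
      = V.bracket (V.bracket x y) z + V.lc z (V.lc x y) - V.lc z (V.lc y x) := by
    intro x y z
    rw [← V.lc_torsion_free (V.bracket x y) z, ← V.lc_torsion_free x y, V.lc_sub]
    abel
  have hjacobi := V.bracket_jacobi a b c
  simp only [curvature, hbracket]
  rw [← neg_eq_zero, ← hjacobi]
  abel

/-- The exterior derivative of the 1-form `⟨v, ·⟩`. -/
def dDual (v : X) : X →ₗ[C] X →ₗ[C] C :=
  LinearMap.mk₂ C (fun a b => V.g (V.lc a v) b - V.g (V.lc b v) a)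
    (fun a a' b => by simp only [V.lc_add_vec, V.g_add_left, V.g_add_right]; ring)
    (fun f a b => by simp only [V.lc_smul_vec, V.g_smul_left, V.g_smul_right, smul_eq_mul]; ring)
    (fun a b b' => by simp only [V.lc_add_vec, V.g_add_left, V.g_add_right]; ring)
    (fun f a b => by simp only [V.lc_smul_vec, V.g_smul_left, V.g_smul_right, smul_eq_mul]; ring)

@[simp]
lemma dDual_apply (v a b : X) : V.dDual v a b = V.g (V.lc a v) b - V.g (V.lc b v) a := rfl

lemma dDual_swap (v a b : X) : V.dDual v b a = - V.dDual v a b := by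
  simp

theorem curvature_cyclic_sum_of_vectorial_torsion (v : X) (nab : X → X → X)
    (hnab : ∀ a b, nab a b = V.lc a b + V.g a b • v - V.g v b • a) (a b c : X) :
    V.curvature nab a b c + V.curvature nab b c a + V.curvature nab c a b
      = V.curvature V.lc a b c + V.curvature V.lc b c a + V.curvature V.lc c a b
        + (V.dDual v a b • c + V.dDual v b c • a + V.dDual v c a • b) := by
  simp only [curvature, dDual_apply, hnab, ← V.lc_torsion_free, V.lc_sub_vec, V.lc_sub,
    V.lc_add, V.lc_smul, V.lc_metric, V.g_sub_right, V.g_add_right, V.g_smul_right,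
    V.g_sub_left]
  simp only [V.g_symm v a, V.g_symm v b, V.g_symm v c, V.g_symm b a, V.g_symm c a,
    V.g_symm c b]
  module

theorem eq_zero_of_cyclic_smul_eq_zero {n : ℕ} (hn : 3 ≤ n) (e : Fin n → X)
    (hunit : ∀ i, V.g (e i) (e i) = 1) (hspan : ∀ a, a = ∑ i, V.g a (e i) • e i)
    (ω : X →ₗ[C] X →ₗ[C] C) (hω : ∀ a b, ω b a = - ω a b)
    (hcyclic : ∀ a b c, ω a b • c + ω b c • a + ω c a • b = 0) (a b : X) :
    ω a b = 0 := by
  have hk : ∀ k, ω a b + ω b (e k) * V.g a (e k) + ω (e k) a * V.g b (e k) = 0 := by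
    intro k
    have h := congrArg (V.g · (e k)) (hcyclic a b (e k))
    simpa only [V.g_add_left, V.g_smul_left, hunit, mul_one, V.g_zero_left] using h
  have htrace_right : ∑ k, ω b (e k) * V.g a (e k) = ω b a := by
    conv_rhs => rw [hspan a]
    simp [mul_comm]
  have htrace_left : ∑ k, ω (e k) a * V.g b (e k) = ω b a := by
    conv_rhs => rw [hspan b]
    simp [mul_comm]
  have hsum := Finset.sum_eq_zero (fun k (_ : k ∈ Finset.univ) => hk k)
  rw [Finset.sum_add_distrib, Finset.sum_add_distrib, htrace_right, htrace_left,
    Finset.sum_const, Finset.card_univ, Fintype.card_fin, hω a b] at hsum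
  have hscaled : ((n : ℝ) - 2) • ω a b = 0 := by
    rw [sub_smul, Nat.cast_smul_eq_nsmul, two_smul, ← hsum]
    abel
  have hn' : (n : ℝ) - 2 ≠ 0 := by
    have : (3 : ℝ) ≤ n := by exact_mod_cast hn
    linarith
  exact (smul_eq_zero.mp hscaled).resolve_left hn'

end VectorFieldCalculus

/-- On `(Mⁿ,g)`, `n ≥ 3`, if the metric connection
`∇_a b = ∇^g_a b + ⟨a,b⟩v - ⟨v,b⟩a` with vectorial torsion `v` is flat, then the 1-form dual
to `v` is closed: `⟨∇^g_a v, b⟩ = ⟨∇^g_b v, a⟩` for all `a, b`. -/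
theorem vectorial_torsion_flat_closed {C X : Type*} [CommRing C] [Algebra ℝ C]
    [AddCommGroup X] [Module C X] {n : ℕ} (hn : 3 ≤ n)
    (V : VectorFieldCalculus C X) (v : X)
    (nab : X → X → X)
    (hnab : ∀ a b, nab a b = V.lc a b + V.g a b • v - V.g v b • a)
    (hflat : ∀ a b c, nab a (nab b c) - nab b (nab a c) - nab (V.bracket a b) c = 0)
    (e : Fin n → X)
    (horth : ∀ i j, V.g (e i) (e j) = if i = j then 1 else 0)
    (hspan : ∀ a, a = ∑ i, V.g a (e i) • e i) :
    ∀ a b, V.g (V.lc a v) b = V.g (V.lc b v) a := by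
  have hR : ∀ a b c, V.curvature nab a b c = 0 := hflat
  have hcyclic : ∀ a b c, V.dDual v a b • c + V.dDual v b c • a + V.dDual v c a • b = 0 := by
    intro a b c
    simpa [hR, V.curvature_lc_cyclic_sum] using
      (V.curvature_cyclic_sum_of_vectorial_torsion v nab hnab a b c).symm
  intro a b
  have h := V.eq_zero_of_cyclic_smul_eq_zero hn e (fun i => by simp [horth]) hspan
    (V.dDual v) (V.dDual_swap v) hcyclic a b
  rwa [V.dDual_apply, sub_eq_zero] at h
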